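/- Let G₁ and G₂ be groups and let f : G₁ → G₂ be a map satisfying f(a²ba⁻¹) = f(a)²·f(b)·f(a)⁻¹ for all a,b ∈ G₁. Then f(aba) = f(a)·f(b)·f(a) for all a,b ∈ G₁. -/

import Mathlib

/-! Write `a ⊙ b = a² b a⁻¹`. Then `a b a = a ⊙ (a⁻¹ b a²)` and `(a⁻¹ b a²)⁻¹ = a⁻¹ ⊙ b⁻¹`, so once
`f` is known to preserve `1` and inverses, applying the hypothesis twice gives the claim. -/

section GyroHom

variable {G₁ G₂ : Type*} [Group G₁] [Group G₂] {f : G₁ → G₂}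

theorem map_one_of_map_gyro (hf : ∀ a b : G₁, f (a ^ 2 * b * a⁻¹) = f a ^ 2 * f b * (f a)⁻¹) :
    f 1 = 1 := by
  have h := hf 1 1
  simp only [mul_one, inv_one, pow_two, mul_inv_cancel_right] at h
  exact right_eq_mul.mp h

theorem map_inv_of_map_gyro (hf : ∀ a b : G₁, f (a ^ 2 * b * a⁻¹) = f a ^ 2 * f b * (f a)⁻¹)
    (a : G₁) : f a⁻¹ = (f a)⁻¹ := by
  have h := hf a a⁻¹
  rw [show a ^ 2 * a⁻¹ * a⁻¹ = 1 by group, map_one_of_map_gyro hf, eq_comm, mul_inv_eq_one,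
    pow_two, mul_assoc, mul_eq_left] at h
  exact eq_inv_of_mul_eq_one_right h

theorem map_inv_mul_mul_sq_of_map_gyro
    (hf : ∀ a b : G₁, f (a ^ 2 * b * a⁻¹) = f a ^ 2 * f b * (f a)⁻¹) (a b : G₁) :
    f (a⁻¹ * b * a ^ 2) = (f a)⁻¹ * f b * f a ^ 2 := by
  have h := hf a⁻¹ b⁻¹
  rw [show a⁻¹ ^ 2 * b⁻¹ * a⁻¹⁻¹ = (a⁻¹ * b * a ^ 2)⁻¹ by group] at h
  simp only [map_inv_of_map_gyro hf] at h
  rw [← inv_inj, h]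
  group

end GyroHom

/-- A map preserving the gyrogroup operation `a ⊙ b = a² b a⁻¹` satisfies
`f (a b a) = f a · f b · f a`. -/
theorem gyro_hom_eq_5 (G₁ G₂ : Type*) [Group G₁] [Group G₂] (f : G₁ → G₂)
    (hf : ∀ a b : G₁, f (a ^ 2 * b * a⁻¹) = (f a) ^ 2 * f b * (f a)⁻¹) :
    ∀ a b : G₁, f (a * b * a) = f a * f b * f a := by
  intro a b
  calc f (a * b * a) = f (a ^ 2 * (a⁻¹ * b * a ^ 2) * a⁻¹) := by congr 1; group
    _ = f a ^ 2 * ((f a)⁻¹ * f b * f a ^ 2) * (f a)⁻¹ := by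
      rw [hf, map_inv_mul_mul_sq_of_map_gyro hf]
    _ = f a * f b * f a := by group
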